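/- arXiv:math/0510069 — 5 statements merged into one kernel-verified Lean document; each statement's English description precedes it below -/
import Mathlib

section
/- For a finite-dimensional nonempty affine space A, the image of A under the canonical embedding into (A†)* is exactly the affine hyperplane {ξ ∈ (A†)* : ξ(1_A) = 1}, and the image of V(A) is exactly the kernel hyperplane {ξ : ξ(1_A) = 0}. -/
variable {K V A : Type*} [Field K] [AddCommGroup V] [Module K V]
  [Nonempty A] [AddTorsor V A]

/-- The canonical evaluation map `A → (A†)*`, `a ↦ (φ ↦ φ a)`. -/
def affEval (K : Type*) {V A : Type*} [Field K] [AddCommGroup V] [Module K V]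
    [Nonempty A] [AddTorsor V A] (a : A) : Module.Dual K (A →ᵃ[K] K) where
  toFun φ := φ a
  map_add' φ ψ := rfl
  map_smul' c φ := rfl

/-- The map `V(A) → (A†)*`, `v ↦ (φ ↦ φ_V(v))`. -/
def affLinEval (K : Type*) {V A : Type*} [Field K] [AddCommGroup V] [Module K V]
    [Nonempty A] [AddTorsor V A] (v : V) : Module.Dual K (A →ᵃ[K] K) where
  toFun φ := φ.linear v
  map_add' φ ψ := rfl
  map_smul' c φ := rfl

/-- Sending `f : V* ` to the affine map `a ↦ f (a -ᵥ o)`, linearly in `f`. -/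
def affLmap (K : Type*) {V A : Type*} [Field K] [AddCommGroup V] [Module K V]
    [Nonempty A] [AddTorsor V A] (o : A) : Module.Dual K V →ₗ[K] (A →ᵃ[K] K) where
  toFun f :=
    { toFun := fun a => f (a -ᵥ o)
      linear := f
      map_vadd' := by intro p v; simp [vadd_vsub_assoc, map_add] }
  map_add' f g := by ext a; rfl
  map_smul' c f := by ext a; rfl

lemma aff_decomp (o : A) (φ : A →ᵃ[K] K) :
    φ = φ o • AffineMap.const K A (1 : K) + affLmap K o φ.linear := by
  ext a
  have h : φ a = φ.linear (a -ᵥ o) + φ o := by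
    conv_lhs => rw [show a = (a -ᵥ o) +ᵥ o from (vsub_vadd a o).symm]
    simp [AffineMap.map_vadd]
  rw [h]
  simp [affLmap, add_comm]

lemma key (ξ : Module.Dual K (A →ᵃ[K] K)) [FiniteDimensional K V] (o : A) :
    ∃ v : V, ∀ φ : A →ᵃ[K] K,
      ξ φ = φ o * ξ (AffineMap.const K A (1 : K)) + φ.linear v := by
  set F : Module.Dual K (Module.Dual K V) := ξ ∘ₗ affLmap K o with hF
  refine ⟨(Module.evalEquiv K V).symm F, fun φ => ?_⟩
  have hv : ∀ f : Module.Dual K V, f ((Module.evalEquiv K V).symm F) = F f := by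
    intro f
    have := (Module.evalEquiv K V).apply_symm_apply F
    calc f ((Module.evalEquiv K V).symm F)
        = Module.evalEquiv K V ((Module.evalEquiv K V).symm F) f := rfl
      _ = F f := by rw [this]
  conv_lhs => rw [aff_decomp o φ]
  rw [map_add, map_smul, hv φ.linear]
  rfl

/-- For a finite-dimensional affine space, the image of `A` in `(A†)*` is exactly
the affine hyperplane `{ξ : ξ(1_A) = 1}`, and the image of `V(A)` is exactly the
hyperplane `{ξ : ξ(1_A) = 0}`. -/
theorem affEval_range_eq_hyperplane [FiniteDimensional K V] :
    Set.range (affEval K : A → Module.Dual K (A →ᵃ[K] K)) =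
        {ξ : Module.Dual K (A →ᵃ[K] K) | ξ (AffineMap.const K A (1 : K)) = 1} ∧
      Set.range (affLinEval K : V → Module.Dual K (A →ᵃ[K] K)) =
        {ξ : Module.Dual K (A →ᵃ[K] K) | ξ (AffineMap.const K A (1 : K)) = 0} := by
  obtain ⟨o⟩ := ‹Nonempty A›
  constructor
  · ext ξ
    constructor
    · rintro ⟨a, rfl⟩; simp [affEval]
    · intro hξ
      obtain ⟨v, hv⟩ := key ξ o
      refine ⟨v +ᵥ o, ?_⟩
      apply LinearMap.ext; intro φ
      simp only [affEval, LinearMap.coe_mk, AddHom.coe_mk]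
      rw [hv φ, hξ, mul_one, AffineMap.map_vadd]
      exact (add_comm _ _)
  · ext ξ
    constructor
    · rintro ⟨v, rfl⟩; simp [affLinEval]
    · intro hξ
      obtain ⟨v, hv⟩ := key ξ o
      refine ⟨v, ?_⟩
      apply LinearMap.ext; intro φ
      simp only [affLinEval, LinearMap.coe_mk, AddHom.coe_mk]
      rw [hv φ, hξ, mul_zero, zero_add]
end

section
/- A skew-symmetric bi-affine bracket [·,·] : A × A → V(A) on an affine space A is completely determined by its affine-linear part: if two skew-symmetric bi-affine brackets have the same affine-linear part [a, ·]_V for every a ∈ A, then they are equal. -/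
/-! The difference `D = B - B'` of the two brackets is again skew-symmetric, and by the hypothesis
on affine-linear parts it does not depend on its second argument. Hence
`D a b = D a a = -D a a`, so `D a b = 0` since `2 ≠ 0`. -/

theorem eq_zero_of_skew_of_apply_right_eq {A V : Type*} [AddCommGroup V] [IsAddTorsionFree V]
    {D : A → A → V} (hskew : ∀ a b, D a b = -D b a) (hright : ∀ a b c, D a b = D a c) :
    D = 0 := by
  funext a b
  exact (hright a b a).trans (self_eq_neg.mp (hskew a a))

theorem skew_biaffine_bracket_determined_by_affine_linear_part_general
    {K V A : Type*} [Field K] [CharZero K] [AddCommGroup V] [Module K V]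
    [AddTorsor V A]
    (B B' : A → A → V)
    -- skew-symmetry:
    (hBskew : ∀ a b : A, B a b = -B b a)
    (hB'skew : ∀ a b : A, B' a b = -B' b a)
    -- the two brackets have the same affine-linear part:
    (hsame : ∀ (a b : A) (u : V), B a (u +ᵥ b) - B a b = B' a (u +ᵥ b) - B' a b) :
    B = B' := by
  have : IsAddTorsionFree V := .of_isTorsionFree K V
  have hskew : ∀ a b, (B - B') a b = -(B - B') b a := fun a b => by
    simp only [Pi.sub_apply, hBskew a b, hB'skew a b, neg_sub_neg, neg_sub]
  have hright : ∀ a b c, (B - B') a b = (B - B') a c := fun a b c => by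
    have h := hsame a b (c -ᵥ b)
    rw [vsub_vadd] at h
    simp only [Pi.sub_apply]
    linear_combination (norm := abel) -h
  exact sub_eq_zero.mp (eq_zero_of_skew_of_apply_right_eq hskew hright)

/-- A skew-symmetric bi-affine bracket `[·,·] : A × A → V(A)` is completely
determined by its affine-linear part: if two such brackets have the same
affine-linear part `[a,·]_V` for every `a`, then they coincide. -/
theorem skew_biaffine_bracket_determined_by_affine_linear_part
    {K V A : Type*} [Field K] [CharZero K] [AddCommGroup V] [Module K V]
    [Nonempty A] [AddTorsor V A]
    (B B' : A → A → V)
    -- bi-affinity of `B` (affine in each argument):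
    (hB1 : ∀ b : A, ∃ L : V →ₗ[K] V, ∀ (a : A) (u : V), B (u +ᵥ a) b = B a b + L u)
    (hB2 : ∀ a : A, ∃ L : V →ₗ[K] V, ∀ (b : A) (u : V), B a (u +ᵥ b) = B a b + L u)
    -- bi-affinity of `B'`:
    (hB'1 : ∀ b : A, ∃ L : V →ₗ[K] V, ∀ (a : A) (u : V), B' (u +ᵥ a) b = B' a b + L u)
    (hB'2 : ∀ a : A, ∃ L : V →ₗ[K] V, ∀ (b : A) (u : V), B' a (u +ᵥ b) = B' a b + L u)
    -- skew-symmetry: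
    (hBskew : ∀ a b : A, B a b = -B b a)
    (hB'skew : ∀ a b : A, B' a b = -B' b a)
    -- the two brackets have the same affine-linear part:
    (hsame : ∀ (a b : A) (u : V), B a (u +ᵥ b) - B a b = B' a (u +ᵥ b) - B' a b) :
    B = B' :=
  skew_biaffine_bracket_determined_by_affine_linear_part_general (K := K) B B' hBskew hB'skew hsame
end

section
/- If [·,·] : A × A → V is a Lie affgebra bracket on an affine space A, then its bilinear part [·,·]_V : V × V → V is a Lie bracket on V (skew-symmetric and Jacobi). -/
/-- If `[·,·] : A × A → V` is a Lie affgebra bracket on an affine space `A`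
(bi-affine, skew-symmetric, satisfying the affine Jacobi identity, with
affine-linear part `ad a = [a,·]_V²`), then its bilinear part
`[u,w]_V = ad (a₀+u) w − ad a₀ w` is a Lie bracket on `V`: it is
skew-symmetric and satisfies the Jacobi identity. -/
theorem lie_affgebra_bilinear_part_is_lie_bracket
    {K V A : Type*} [Field K] [AddCommGroup V] [Module K V]
    [Nonempty A] [AddTorsor V A]
    (B : A → A → V) (ad : A → V →ₗ[K] V)
    -- `ad a` is the affine-linear part `[a,·]_V²` of the bracket:
    (had : ∀ (a b : A) (u : V), B a (u +ᵥ b) = B a b + ad a u)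
    -- skew-symmetry:
    (hskew : ∀ a b : A, B a b = -B b a)
    -- affine Jacobi identity:
    (hjac : ∀ a₁ a₂ a₃ : A,
      ad a₁ (B a₂ a₃) + ad a₂ (B a₃ a₁) + ad a₃ (B a₁ a₂) = 0)
    -- a base point, used to express the bilinear part:
    (a₀ : A)
    -- the bilinear part `[·,·]_V`:
    (L : V → V → V) (hL : ∀ u w : V, L u w = ad (u +ᵥ a₀) w - ad a₀ w) :
    (∀ u w : V, L u w = -L w u) ∧
    (∀ u v w : V, L u (L v w) + L v (L w u) + L w (L u v) = 0) := by
  -- first-argument affine rule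
  have hfirst : ∀ (a b : A) (u : V), B (u +ᵥ a) b = B a b - ad b u := by
    intro a b u
    rw [hskew (u +ᵥ a) b, had b a u, hskew a b]
    abel
  -- key identity giving skew-symmetry of L
  have key : ∀ u w : V, ad (u +ᵥ a₀) w = ad a₀ w + ad a₀ u - ad (w +ᵥ a₀) u := by
    intro u w
    have h1 := had (u +ᵥ a₀) a₀ w
    have h2 := hfirst a₀ (w +ᵥ a₀) u
    have h3 := had a₀ a₀ w
    have h4 := hfirst a₀ a₀ u
    have h12 : B (u +ᵥ a₀) a₀ + ad (u +ᵥ a₀) w = B a₀ (w +ᵥ a₀) - ad (w +ᵥ a₀) u := by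
      rw [← h1, ← h2]
    rw [h3, h4] at h12
    have := h12
    abel_nf at this ⊢
    try exact this
    try linear_combination (norm := abel) this
  -- expansion of B at shifted points
  have hBB : ∀ v w : V,
      B (v +ᵥ a₀) (w +ᵥ a₀) = B a₀ a₀ - ad a₀ v + ad (v +ᵥ a₀) w := by
    intro v w
    rw [had (v +ᵥ a₀) a₀ w, hfirst a₀ a₀ v]
    try abel
  -- ad kills B a₀ a₀
  have hb0 : ∀ u : V, ad (u +ᵥ a₀) (B a₀ a₀) = 0 := by
    intro u
    have h := hjac (u +ᵥ a₀) a₀ a₀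
    rw [hskew (u +ᵥ a₀) a₀, map_neg] at h
    have : ad (u +ᵥ a₀) (B a₀ a₀) = 0 := by
      linear_combination (norm := abel) h
    exact this
  have hb00 : ad a₀ (B a₀ a₀) = 0 := by
    have := hb0 0
    rwa [zero_vadd] at this
  -- mixed Jacobi identity (one point at a₀)
  have hE : ∀ u v : V,
      ad (u +ᵥ a₀) (ad a₀ v)
        = ad (v +ᵥ a₀) (ad a₀ u) + ad a₀ (ad (u +ᵥ a₀) v) - ad a₀ (ad a₀ u) := by
    intro u v
    have h := hjac (u +ᵥ a₀) (v +ᵥ a₀) a₀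
    rw [hfirst a₀ a₀ v, had a₀ a₀ u, hBB u v] at h
    simp only [map_sub, map_add] at h
    rw [hb0 u, hb0 v, hb00] at h
    linear_combination (norm := abel) -h
  -- fully shifted Jacobi identity
  have hstar : ∀ u v w : V,
      ad (u +ᵥ a₀) (ad (v +ᵥ a₀) w) + ad (v +ᵥ a₀) (ad (w +ᵥ a₀) u)
          + ad (w +ᵥ a₀) (ad (u +ᵥ a₀) v)
        = ad (u +ᵥ a₀) (ad a₀ v) + ad (v +ᵥ a₀) (ad a₀ w)
          + ad (w +ᵥ a₀) (ad a₀ u) := by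
    intro u v w
    have h := hjac (u +ᵥ a₀) (v +ᵥ a₀) (w +ᵥ a₀)
    rw [hBB v w, hBB w u, hBB u v] at h
    simp only [map_sub, map_add] at h
    rw [hb0 u, hb0 v, hb0 w] at h
    linear_combination (norm := abel) h
  constructor
  · intro u w
    rw [hL u w, hL w u, key u w]
    abel
  · intro u v w
    simp only [hL, map_sub]
    have e1 := hE u v
    have e2 := hE v w
    have e3 := hE w u
    have hs := hstar u v w
    linear_combination (norm := abel) hs + e1 + e2 + e3
end

section
/- If [·,·] is a Lie affgebra bracket on an affine space A modelled on V, then for each a ∈ A, the map D_a = [a,·]_V² : V → V is a derivation of the Lie algebra (V, [·,·]_V): D_a([u,w]_V) = [D_a u, w]_V + [u, D_a w]_V. -/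
/-- For a Lie affgebra bracket `[·,·] : A × A → V` with affine-linear part
`ad a = [a,·]_V²` and bilinear part `[·,·]_V`, every `D_a = ad a` is a
derivation of the Lie algebra `(V, [·,·]_V)`. -/
theorem lie_affgebra_ad_is_derivation
    {K V A : Type*} [Field K] [AddCommGroup V] [Module K V]
    [Nonempty A] [AddTorsor V A]
    (B : A → A → V) (ad : A → V →ₗ[K] V)
    -- `ad a` is the affine-linear part `[a,·]_V²` of the bracket:
    (had : ∀ (a b : A) (u : V), B a (u +ᵥ b) = B a b + ad a u)
    -- skew-symmetry:
    (hskew : ∀ a b : A, B a b = -B b a)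
    -- affine Jacobi identity:
    (hjac : ∀ a₁ a₂ a₃ : A,
      ad a₁ (B a₂ a₃) + ad a₂ (B a₃ a₁) + ad a₃ (B a₁ a₂) = 0)
    -- the bilinear part `[·,·]_V`, expressed through a base point `a₀`:
    (a₀ : A)
    (L : V → V → V) (hL : ∀ u w : V, L u w = ad (u +ᵥ a₀) w - ad a₀ w) :
    ∀ (a : A) (u w : V),
      ad a (L u w) = L (ad a u) w + L u (ad a w) := by
  -- first-argument affinity of B
  have hB' : ∀ (a b : A) (u : V), B (u +ᵥ a) b = B a b - ad b u := by
    intro a b u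
    rw [hskew (u +ᵥ a) b, had, hskew b a]
    abel
  -- key commutation identity
  have hcomm : ∀ (b c : A) (u w : V),
      ad (u +ᵥ b) w - ad b w = ad c u - ad (w +ᵥ c) u := by
    intro b c u w
    have e1 : B (u +ᵥ b) (w +ᵥ c) = B b c - ad c u + ad (u +ᵥ b) w := by
      rw [had, hB']
    have e2 : B (u +ᵥ b) (w +ᵥ c) = (B b c + ad b w) - ad (w +ᵥ c) u := by
      rw [hB', had]
    have e3 : B b c - ad c u + ad (u +ᵥ b) w
        = (B b c + ad b w) - ad (w +ᵥ c) u := e1.symm.trans e2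
    calc ad (u +ᵥ b) w - ad b w
        = (B b c - ad c u + ad (u +ᵥ b) w) - (B b c + ad b w) + ad c u := by abel
      _ = ((B b c + ad b w) - ad (w +ᵥ c) u) - (B b c + ad b w) + ad c u := by
          rw [e3]
      _ = ad c u - ad (w +ᵥ c) u := by abel
  -- skewness of L
  have hLskew : ∀ u w : V, L u w = - L w u := by
    intro u w
    rw [hL, hL]
    calc ad (u +ᵥ a₀) w - ad a₀ w = ad a₀ u - ad (w +ᵥ a₀) u := hcomm a₀ a₀ u w
      _ = -(ad (w +ᵥ a₀) u - ad a₀ u) := by abel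
  intro a u w
  have J1 := hjac a (u +ᵥ a₀) (w +ᵥ a₀)
  have J2 := hjac a (u +ᵥ a₀) a₀
  have J3 := hjac a a₀ (w +ᵥ a₀)
  have J4 := hjac a a₀ a₀
  -- rewrite all B's to base forms
  rw [had, hB', hB', had] at J1
  rw [hB', had] at J2
  rw [had, hB'] at J3
  simp only [map_add, map_sub] at J1 J2 J3
  -- rewrite the goal in terms of `ad` at shifted points
  rw [hLskew (ad a u) w, hL u w, hL u (ad a w), hL w (ad a u), map_sub]
  linear_combination (norm := abel1) J1 - J2 - J3 + J4
end

section
/- Fix a point a₀ ∈ A, where A is an affine space with vector space V. If [·,·]_V is a Lie algebra bracket on V and D is a derivation of (V,[·,·]_V), then [a₀+u, a₀+w] = [u,w]_V + D(w) − D(u) for all u, w ∈ V defines a Lie affgebra bracket on A with zero constant term. -/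
/-- Given a Lie algebra bracket `[·,·]_V` on `V` and a derivation `D` of it,
the formula `[a₀+u, a₀+w] := [u,w]_V + D(w) − D(u)` defines a Lie affgebra
bracket on the affine space `A` with distinguished point `a₀`: it is
skew-symmetric, bi-affine (with affine-linear part `ad a u = [a−a₀, u]_V + D u`),
and satisfies the affine Jacobi identity. -/
theorem lie_bracket_and_derivation_give_lie_affgebra
    {K V A : Type*} [Field K] [AddCommGroup V] [Module K V]
    [Nonempty A] [AddTorsor V A] (a₀ : A)
    (L : V →ₗ[K] V →ₗ[K] V)
    (hLskew : ∀ u w : V, L u w = -L w u)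
    (hLjac : ∀ u v w : V, L u (L v w) + L v (L w u) + L w (L u v) = 0)
    (D : V →ₗ[K] V)
    (hD : ∀ u w : V, D (L u w) = L (D u) w + L u (D w))
    -- the bracket defined by the formula `[a₀+u, a₀+w] = [u,w]_V + D w − D u`:
    (B : A → A → V)
    (hB : ∀ u w : V, B (u +ᵥ a₀) (w +ᵥ a₀) = L u w + D w - D u)
    -- its affine-linear part:
    (ad : A → V →ₗ[K] V) (had : ∀ (a : A) (u : V), ad a u = L (a -ᵥ a₀) u + D u) :
    -- skew-symmetry:
    (∀ a b : A, B a b = -B b a) ∧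
    -- bi-affinity in the second argument, with linear part `ad`:
    (∀ (a b : A) (u : V), B a (u +ᵥ b) = B a b + ad a u) ∧
    -- affine Jacobi identity:
    (∀ a₁ a₂ a₃ : A,
      ad a₁ (B a₂ a₃) + ad a₂ (B a₃ a₁) + ad a₃ (B a₁ a₂) = 0) := by
  have key : ∀ a b : A, B a b = L (a -ᵥ a₀) (b -ᵥ a₀) + D (b -ᵥ a₀) - D (a -ᵥ a₀) := by
    intro a b
    have := hB (a -ᵥ a₀) (b -ᵥ a₀)
    simpa [vsub_vadd] using this
  refine ⟨?_, ?_, ?_⟩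
  · intro a b
    rw [key, key, hLskew (a -ᵥ a₀) (b -ᵥ a₀)]
    abel
  · intro a b u
    rw [key, key a b, had, vadd_vsub_assoc, map_add, map_add]
    abel
  · intro a₁ a₂ a₃
    set x := a₁ -ᵥ a₀
    set y := a₂ -ᵥ a₀
    set z := a₃ -ᵥ a₀
    rw [key, key, key, had, had, had]
    simp only [map_add, map_sub, hD, LinearMap.add_apply, LinearMap.sub_apply]
    rw [hLskew (D y) z, hLskew (D z) x, hLskew (D x) y,
      show L x (L y z) = -(L y (L z x) + L z (L x y)) by
        have := hLjac x y z; linear_combination (norm := abel) this]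
    abel
end
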